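/- Let R_1, …, R_m be a Markov partition for f, and define ∂^s 𝓡 = ⋃_{i=1}^m ∂^s R_i and ∂^u 𝓡 = ⋃_{i=1}^m ∂^u R_i. Then f(∂^s 𝓡) ⊆ ∂^s 𝓡 and f(∂^u 𝓡) ⊇ ∂^u 𝓡. -/

import Mathlib

/-!
If `x ∈ ∂^s R_i` but `f x` lay in no stable border, pick `j` with `x` in the closure of
`int R_i ∩ f⁻¹(int R_j)`; then `f x ∈ R_j` is interior to `W^u(f x, R_j)`, and the Markov
inclusion `f(W^u(a, R_i)) ⊇ W^u(f a, R_j)` at nearby points `a`, passed to the limit with the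
continuity of the bracket, makes `x` interior to `W^u(x, R_i)`. The inclusion for unstable
borders is the same statement for `f⁻¹`, for which `R` is again a Markov partition, with
stable and unstable sets exchanged and the bracket flipped.
-/

open Set Filter Metric Topology

variable {M : Type*} [MetricSpace M] [CompactSpace M]

/-- `f` is expansive with expansivity constant `ρ`: if two orbits stay `ρ`-close for all
integer times, the points coincide. -/
def IsExpansiveWith (f : Equiv.Perm M) (ρ : ℝ) : Prop :=
  ∀ x y : M, (∀ n : ℤ, dist ((f ^ n) x) ((f ^ n) y) ≤ ρ) → x = y

/-- The stable set `W^s(x)`. -/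
def stableSet (f : Equiv.Perm M) (x : M) : Set M :=
  {y : M | Tendsto (fun n : ℤ => dist ((f ^ n) x) ((f ^ n) y)) atTop (𝓝 0)}

/-- The unstable set `W^u(x)`. -/
def unstableSet (f : Equiv.Perm M) (x : M) : Set M :=
  {y : M | Tendsto (fun n : ℤ => dist ((f ^ n) x) ((f ^ n) y)) atBot (𝓝 0)}

/-- The `ε`-stable set `W^s_ε(x)`. -/
def epsStable (f : Equiv.Perm M) (ε : ℝ) (x : M) : Set M :=
  {y : M | ∀ n : ℤ, 0 ≤ n → dist ((f ^ n) x) ((f ^ n) y) ≤ ε}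

/-- The `ε`-unstable set `W^u_ε(x)`. -/
def epsUnstable (f : Equiv.Perm M) (ε : ℝ) (x : M) : Set M :=
  {y : M | ∀ n : ℤ, n ≤ 0 → dist ((f ^ n) x) ((f ^ n) y) ≤ ε}

/-- Shadowing property: every `δ`-pseudo-orbit is `ε`-shadowed by a true orbit. -/
def HasShadowing (f : Equiv.Perm M) : Prop :=
  ∀ ε : ℝ, 0 < ε → ∃ δ : ℝ, 0 < δ ∧ ∀ y : ℤ → M,
    (∀ n : ℤ, dist (f (y n)) (y (n + 1)) < δ) →
      ∃ z : M, ∀ n : ℤ, dist ((f ^ n) z) (y n) ≤ ε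

/-- A rectangle: a nonempty set of diameter `< δ` closed under the bracket operation. -/
def IsRectangle (δ : ℝ) (br : M → M → M) (R : Set M) : Prop :=
  R.Nonempty ∧ Metric.diam R < δ ∧ ∀ x ∈ R, ∀ y ∈ R, br x y ∈ R

/-- Stable border `∂^s R`: points of `R` that are not interior points of
`W^u(x,R) = W^u_ε(x) ∩ R` in the subspace topology of `W^u_ε(x)`. -/
def stableBorder (f : Equiv.Perm M) (ε : ℝ) (R : Set M) : Set M :=
  {x : M | x ∈ R ∧ ¬ ∃ U : Set M, IsOpen U ∧ x ∈ U ∧ U ∩ epsUnstable f ε x ⊆ R}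

/-- Unstable border `∂^u R`: points of `R` that are not interior points of
`W^s(x,R) = W^s_ε(x) ∩ R` in the subspace topology of `W^s_ε(x)`. -/
def unstableBorder (f : Equiv.Perm M) (ε : ℝ) (R : Set M) : Set M :=
  {x : M | x ∈ R ∧ ¬ ∃ U : Set M, IsOpen U ∧ x ∈ U ∧ U ∩ epsStable f ε x ⊆ R}

/-- A Markov partition: a finite family of proper rectangles covering `M`, with pairwise
disjoint interiors, satisfying the Markov inclusions for the invariant fibers. -/
def IsMarkovPartition (f : Equiv.Perm M) (ε δ : ℝ) (br : M → M → M) {m : ℕ}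
    (R : Fin m → Set M) : Prop :=
  (∀ i, IsRectangle δ br (R i)) ∧
  (∀ i, R i = closure (interior (R i))) ∧
  (⋃ i, R i) = Set.univ ∧
  (∀ i j, i ≠ j → interior (R i) ∩ interior (R j) = ∅) ∧
  ∀ i j, ∀ x ∈ interior (R i) ∩ ⇑f ⁻¹' interior (R j),
    ⇑f '' (epsStable f ε x ∩ R i) ⊆ epsStable f ε (f x) ∩ R j ∧
    epsUnstable f ε (f x) ∩ R j ⊆ ⇑f '' (epsUnstable f ε x ∩ R i)

theorem dense_iUnion_interior {X ι : Type*} [TopologicalSpace X] [Finite ι] {R : ι → Set X}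
    (hprop : ∀ i, R i = closure (interior (R i))) (hcov : ⋃ i, R i = univ) :
    Dense (⋃ i, interior (R i)) := by
  rw [dense_iff_closure_eq, closure_iUnion_of_finite, ← hcov]
  exact iUnion_congr fun i => (hprop i).symm

theorem exists_mem_closure_interior_inter_preimage {X ι : Type*} [TopologicalSpace X] [Finite ι]
    {R : ι → Set X} (hprop : ∀ i, R i = closure (interior (R i))) (hcov : ⋃ i, R i = univ)
    {g : X → X} (hg : IsOpenMap g) {i : ι} {x : X} (hx : x ∈ R i) :
    ∃ j, x ∈ closure (interior (R i) ∩ g ⁻¹' interior (R j)) := by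
  have hx' : x ∈ closure (interior (R i)) := hprop i ▸ hx
  have hdense := (dense_iUnion_interior hprop hcov).preimage hg
  have := closure_minimal (hdense.open_subset_closure_inter isOpen_interior) isClosed_closure hx'
  simpa only [preimage_iUnion, inter_iUnion, closure_iUnion_of_finite, mem_iUnion] using this

theorem Equiv.Perm.continuous_zpow {X : Type*} [TopologicalSpace X] {f : Equiv.Perm X}
    (hf : Continuous f) (hf' : Continuous f.symm) : ∀ n : ℤ, Continuous ⇑(f ^ n)
  | (n : ℕ) => by rw [zpow_natCast, Equiv.Perm.coe_pow]; exact hf.iterate n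
  | .negSucc n => by
    rw [zpow_negSucc, ← inv_pow, Equiv.Perm.coe_pow, Equiv.Perm.coe_inv]; exact hf'.iterate _

section Dynamics

omit [CompactSpace M]

variable {f : Equiv.Perm M} {ε δ : ℝ} {br : M → M → M}

theorem epsStable_inv (x : M) :
    epsStable f⁻¹ ε x = epsUnstable f ε x := by
  ext y
  simp only [epsStable, epsUnstable, Set.mem_ofPred_eq, inv_zpow']
  exact ⟨fun h n hn => by simpa using h (-n) (by omega), fun h n hn => h (-n) (by omega)⟩

theorem epsUnstable_inv (x : M) : epsUnstable f⁻¹ ε x = epsStable f ε x := by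
  simpa using (epsStable_inv (f := f⁻¹) x).symm

theorem stableBorder_inv (R : Set M) :
    stableBorder f⁻¹ ε R = unstableBorder f ε R := by
  simp only [stableBorder, unstableBorder, epsUnstable_inv]

theorem mem_epsStable_self (hε : 0 ≤ ε) (x : M) : x ∈ epsStable f ε x :=
  fun _ _ => by simpa using hε

theorem apply_mem_epsUnstable {x z : M} (hz : z ∈ epsUnstable f ε x)
    (hfz : dist (f x) (f z) ≤ ε) : f z ∈ epsUnstable f ε (f x) := by
  intro n hn
  rcases hn.lt_or_eq with hn | rfl
  · simpa only [← Equiv.Perm.mul_apply, ← zpow_add_one] using hz (n + 1) (by omega)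
  · simpa using hfz

theorem isClosed_setOf_mem_epsStable (hf : Continuous f) (hf' : Continuous f.symm) :
    IsClosed {p : M × M | p.2 ∈ epsStable f ε p.1} := by
  have : {p : M × M | p.2 ∈ epsStable f ε p.1} =
      ⋂ n : ℤ, ⋂ _ : 0 ≤ n, {p | dist ((f ^ n) p.1) ((f ^ n) p.2) ≤ ε} := by
    ext; simp [epsStable]
  rw [this]
  refine isClosed_iInter fun n => isClosed_iInter fun _ => isClosed_le ?_ continuous_const
  have hn := Equiv.Perm.continuous_zpow hf hf' n
  exact (hn.comp continuous_fst).dist (hn.comp continuous_snd)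

theorem isClosed_setOf_mem_epsUnstable (hf : Continuous f) (hf' : Continuous f.symm) :
    IsClosed {p : M × M | p.2 ∈ epsUnstable f ε p.1} := by
  simpa only [epsStable_inv] using isClosed_setOf_mem_epsStable (f := f⁻¹) hf' hf

variable (hbr : ∀ x y : M, dist x y < δ → epsStable f ε x ∩ epsUnstable f ε y = {br x y})
include hbr

theorem bracket_mem {x y : M} (hxy : dist x y < δ) :
    br x y ∈ epsStable f ε x ∩ epsUnstable f ε y := by
  rw [hbr x y hxy]; rfl

theorem eq_bracket {x y z : M} (hxy : dist x y < δ)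
    (hz : z ∈ epsStable f ε x ∩ epsUnstable f ε y) : z = br x y := by
  rwa [hbr x y hxy] at hz

theorem epsStable_inv_inter_epsUnstable_inv {x y : M} (hxy : dist x y < δ) :
    epsStable f⁻¹ ε x ∩ epsUnstable f⁻¹ ε y = {br y x} := by
  rw [epsStable_inv, epsUnstable_inv, inter_comm, hbr y x (dist_comm x y ▸ hxy)]

end Dynamics

variable {f : Equiv.Perm M} {ε δ : ℝ} {br : M → M → M}

/-- By compactness it suffices that every cluster value of `br (u k) (v k)` lies in
`W^s_ε(a) ∩ W^u_ε(b) = {br a b}`, and both relations are closed. -/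
theorem tendsto_bracket (hf : Continuous f) (hf' : Continuous f.symm)
    (hbr : ∀ x y : M, dist x y < δ → epsStable f ε x ∩ epsUnstable f ε y = {br x y})
    {ι : Type*} {l : Filter ι} {u v : ι → M} {a b : M} (hu : Tendsto u l (𝓝 a))
    (hv : Tendsto v l (𝓝 b)) (hab : dist a b < δ) :
    Tendsto (fun k => br (u k) (v k)) l (𝓝 (br a b)) := by
  refine tendsto_nhds_of_unique_mapClusterPt fun q hq => ?_
  obtain ⟨U, hUl, hUq⟩ := mapClusterPt_iff_ultrafilter.1 hq
  have hclose : ∀ᶠ k in (U : Filter ι),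
      br (u k) (v k) ∈ epsStable f ε (u k) ∩ epsUnstable f ε (v k) :=
    (((hu.dist hv).eventually (gt_mem_nhds hab)).filter_mono hUl).mono fun _ => bracket_mem hbr
  refine eq_bracket hbr hab ⟨?_, ?_⟩
  · exact (isClosed_setOf_mem_epsStable hf hf').mem_of_tendsto
      ((hu.mono_left hUl).prodMk_nhds hUq) (hclose.mono fun _ hk => hk.1)
  · exact (isClosed_setOf_mem_epsUnstable hf hf').mem_of_tendsto
      ((hv.mono_left hUl).prodMk_nhds hUq) (hclose.mono fun _ hk => hk.2)

namespace IsMarkovPartition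

variable {m : ℕ} {R : Fin m → Set M}

omit [CompactSpace M] in
theorem isClosed (hMP : IsMarkovPartition f ε δ br R) (i : Fin m) : IsClosed (R i) :=
  hMP.2.1 i ▸ isClosed_closure

/-- Approach `x` by points `a` where the Markov inclusion `(ii)` applies: it puts
`[f z, f a]` in `f (W^u(a, R i))`, and these brackets tend to `[f z, f x] = f z`. -/
theorem mem_of_apply_mem_epsUnstable (hf : Continuous f) (hf' : Continuous f.symm) (hε : 0 ≤ ε)
    (hbr : ∀ x y : M, dist x y < δ → epsStable f ε x ∩ epsUnstable f ε y = {br x y})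
    (hMP : IsMarkovPartition f ε δ br R) {i j : Fin m} {x z : M}
    (hx : x ∈ closure (interior (R i) ∩ f ⁻¹' interior (R j)))
    (hz : f z ∈ epsUnstable f ε (f x) ∩ R j) (hzx : dist (f z) (f x) < δ) : z ∈ R i := by
  have := mem_closure_iff_nhdsWithin_neBot.1 hx
  have hfx : Tendsto f (𝓝[interior (R i) ∩ f ⁻¹' interior (R j)] x) (𝓝 (f x)) :=
    (hf.tendsto x).mono_left nhdsWithin_le_nhds
  have hlim := (hf'.tendsto _).comp (tendsto_bracket hf hf' hbr tendsto_const_nhds hfx hzx)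
  rw [← eq_bracket hbr hzx ⟨mem_epsStable_self hε _, hz.1⟩, f.symm_apply_apply] at hlim
  refine (hMP.isClosed i).mem_of_tendsto hlim ?_
  filter_upwards [self_mem_nhdsWithin, hfx (isOpen_ball.mem_nhds (mem_ball'.2 hzx))]
    with a ⟨ha, hfa⟩ hza
  obtain ⟨y, hy, hyw⟩ := (hMP.2.2.2.2 i j a ⟨ha, hfa⟩).2
    ⟨(bracket_mem hbr (mem_ball'.1 hza)).2, (hMP.1 j).2.2 _ hz.2 _ (interior_subset hfa)⟩
  simpa [← hyw] using hy.2

theorem image_stableBorder_subset (hf : Continuous f) (hf' : Continuous f.symm) (hε : 0 < ε)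
    (hδ : 0 < δ)
    (hbr : ∀ x y : M, dist x y < δ → epsStable f ε x ∩ epsUnstable f ε y = {br x y})
    (hMP : IsMarkovPartition f ε δ br R) :
    f '' (⋃ i, stableBorder f ε (R i)) ⊆ ⋃ i, stableBorder f ε (R i) := by
  rintro _ ⟨x, hx, rfl⟩
  obtain ⟨i, hxR, hxB⟩ := mem_iUnion.1 hx
  obtain ⟨j, hxj⟩ := exists_mem_closure_interior_inter_preimage hMP.2.1 hMP.2.2.1
    (Homeomorph.isOpenMap ⟨f, hf, hf'⟩) hxR
  have hfxR : f x ∈ R j := by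
    rw [hMP.2.1 j]
    exact map_mem_closure hf hxj fun _ ha => ha.2
  refine mem_iUnion.2 ⟨j, hfxR, ?_⟩
  rintro ⟨U, hU, hfxU, hUR⟩
  refine hxB ⟨f ⁻¹' (U ∩ ball (f x) (min ε δ)), (hU.inter isOpen_ball).preimage hf,
    ⟨hfxU, mem_ball_self (lt_min hε hδ)⟩, ?_⟩
  rintro z ⟨⟨hzU, hzx⟩, hz⟩
  rw [mem_ball, lt_min_iff] at hzx
  have hfz := apply_mem_epsUnstable hz (dist_comm (f z) (f x) ▸ hzx.1.le)
  exact hMP.mem_of_apply_mem_epsUnstable hf hf' hε.le hbr hxj ⟨hfz, hUR ⟨hzU, hfz⟩⟩ hzx.2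

omit [CompactSpace M] in
theorem inv (hMP : IsMarkovPartition f ε δ br R) :
    IsMarkovPartition f⁻¹ ε δ (fun x y => br y x) R := by
  obtain ⟨hrect, hprop, hcov, hdisj, hMarkov⟩ := hMP
  refine ⟨fun i => ⟨(hrect i).1, (hrect i).2.1, fun x hx y hy => (hrect i).2.2 y hy x hx⟩,
    hprop, hcov, hdisj, fun i j x ⟨hxi, hxj⟩ => ?_⟩
  have hM := hMarkov j i (f⁻¹ x) ⟨hxj, by simpa using hxi⟩
  rw [show f (f⁻¹ x) = x from f.apply_symm_apply x] at hM
  rw [epsStable_inv, epsStable_inv, epsUnstable_inv, epsUnstable_inv]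
  constructor
  · rintro _ ⟨w, hw, rfl⟩
    obtain ⟨v, hv, rfl⟩ := hM.2 hw
    simpa using hv
  · exact fun w hw => ⟨f w, hM.1 ⟨w, hw, rfl⟩, by simp⟩

end IsMarkovPartition

theorem stmt_12_general (f : Equiv.Perm M) (hf : Continuous ⇑f) (hf' : Continuous ⇑f.symm)
    (ε δ : ℝ) (hε0 : 0 < ε) (hδ : 0 < δ) (br : M → M → M)
    (hbr : ∀ x y : M, dist x y < δ → epsStable f ε x ∩ epsUnstable f ε y = {br x y})
    {m : ℕ} (R : Fin m → Set M) (hMP : IsMarkovPartition f ε δ br R) :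
    ⇑f '' (⋃ i, stableBorder f ε (R i)) ⊆ (⋃ i, stableBorder f ε (R i)) ∧
    (⋃ i, unstableBorder f ε (R i)) ⊆ ⇑f '' (⋃ i, unstableBorder f ε (R i)) := by
  refine ⟨hMP.image_stableBorder_subset hf hf' hε0 hδ hbr, fun x hx => ⟨f⁻¹ x, ?_, by simp⟩⟩
  have hinv := hMP.inv.image_stableBorder_subset (f := f⁻¹) hf' hf hε0 hδ
    fun _ _ => epsStable_inv_inter_epsUnstable_inv hbr
  simp only [stableBorder_inv] at hinv
  exact hinv ⟨x, hx, rfl⟩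

/-- For a Markov partition, `f(∂^s 𝓡) ⊆ ∂^s 𝓡` and `f(∂^u 𝓡) ⊇ ∂^u 𝓡`, where
`∂^s 𝓡 = ⋃ ∂^s R_i` and `∂^u 𝓡 = ⋃ ∂^u R_i`. -/
theorem stmt_12 (f : Equiv.Perm M) (hf : Continuous ⇑f) (hf' : Continuous ⇑f.symm)
    (ρ ε δ : ℝ) (hρ : 0 < ρ) (hexp : IsExpansiveWith f ρ)
    (hε0 : 0 < ε) (hε : ε ≤ ρ / 4) (hδ : 0 < δ) (br : M → M → M)
    (hbr : ∀ x y : M, dist x y < δ → epsStable f ε x ∩ epsUnstable f ε y = {br x y})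
    {m : ℕ} (R : Fin m → Set M) (hMP : IsMarkovPartition f ε δ br R) :
    ⇑f '' (⋃ i, stableBorder f ε (R i)) ⊆ (⋃ i, stableBorder f ε (R i)) ∧
    (⋃ i, unstableBorder f ε (R i)) ⊆ ⇑f '' (⋃ i, unstableBorder f ε (R i)) :=
  stmt_12_general f hf hf' ε δ hε0 hδ br hbr R hMP
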